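/- Let N₁₂ = {v ∈ ℤ³ : 8v₁ - 2v₂ - 5v₃ = 0}, and let L ⊆ N₁₂ be the subgroup generated by ρ₁=(3,2,4) and ρ₂=(1,4,0). Then the quotient group N₁₂/L has exactly two elements, i.e. L has index 2 in N₁₂; moreover the class of (2,3,2) = ½ρ₁ + ½ρ₂ generates N₁₂/L. (This shows the toric 3-fold X of Proposition 2.1 has transverse A₁ singularities generically along the torus-invariant curve C₁₂.) -/
import Mathlib


/-- The linear form `(8,-2,-5)` on `ℤ³`. -/
def form12 : (Fin 3 → ℤ) →+ ℤ :=
  AddMonoidHom.mk' (fun v => 8 * v 0 - 2 * v 1 - 5 * v 2)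
    (by intro a b; simp [Pi.add_apply]; ring)

/-- The sublattice `N₁₂ = ℤ³ ∩ (ℝρ₁ + ℝρ₂) = ker(8,-2,-5)`. -/
def N12 : AddSubgroup (Fin 3 → ℤ) := form12.ker

/-- The subgroup `L` generated by `ρ₁ = (3,2,4)` and `ρ₂ = (1,4,0)`. -/
def L12 : AddSubgroup (Fin 3 → ℤ) :=
  AddSubgroup.closure {![3, 2, 4], ![1, 4, 0]}

lemma mem_N12_232 : (![2, 3, 2] : Fin 3 → ℤ) ∈ N12 := by
  show form12 ![2, 3, 2] = 0
  decide

/-- The map `N₁₂ → ℤ/2` given by `v ↦ v₁ mod 2`. -/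
def f12 : N12 →+ ZMod 2 :=
  (Int.castAddHom (ZMod 2)).comp
    ((Pi.evalAddMonoidHom (fun _ : Fin 3 => ℤ) 1).comp N12.subtype)

lemma f12_apply (v : N12) : f12 v = ((v : Fin 3 → ℤ) 1 : ZMod 2) := rfl

lemma mem_L12_iff (v : Fin 3 → ℤ) :
    v ∈ L12 ↔ ∃ s t : ℤ, s • (![3, 2, 4] : Fin 3 → ℤ) + t • ![1, 4, 0] = v := by
  rw [L12, AddSubgroup.mem_closure_pair]

lemma ker_f12 (v : N12) : f12 v = 0 ↔ (v : Fin 3 → ℤ) ∈ L12 := by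
  obtain ⟨v, hv⟩ := v
  have hv' : 8 * v 0 - 2 * v 1 - 5 * v 2 = 0 := hv
  rw [f12_apply]
  constructor
  · intro h
    have hb : (2:ℤ) ∣ v 1 := by
      exact_mod_cast (ZMod.intCast_zmod_eq_zero_iff_dvd (v 1) 2).mp h
    obtain ⟨b', hb'⟩ := hb
    have hc : (4:ℤ) ∣ v 2 := by omega
    obtain ⟨k, hk⟩ := hc
    rw [mem_L12_iff]
    refine ⟨k, v 0 - 3 * k, ?_⟩
    funext i
    fin_cases i <;>
      simp [Matrix.cons_val_zero, Matrix.cons_val_one, Matrix.head_cons] <;> omega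
  · intro h
    rw [mem_L12_iff] at h
    obtain ⟨s, t, hst⟩ := h
    have h1 : v 1 = 2 * s + 4 * t := by
      have := congrFun hst 1
      simp [Matrix.cons_val_one, Matrix.head_cons] at this
      omega
    show ((v 1 : ℤ) : ZMod 2) = 0
    rw [h1]
    exact (ZMod.intCast_zmod_eq_zero_iff_dvd _ 2).mpr ⟨s + 2 * t, by ring⟩

/-- The induced map on the quotient. -/
def g12 : (N12 ⧸ L12.addSubgroupOf N12) →+ ZMod 2 :=
  QuotientAddGroup.lift _ f12 (by
    intro v hv
    exact (ker_f12 v).mpr hv)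

lemma g12_inj : Function.Injective g12 := by
  rw [injective_iff_map_eq_zero]
  intro q
  induction q using QuotientAddGroup.induction_on with
  | H v =>
    intro h
    have : (v : Fin 3 → ℤ) ∈ L12 := (ker_f12 v).mp h
    exact (QuotientAddGroup.eq_zero_iff v).mpr this

lemma g12_mk_m : g12 (QuotientAddGroup.mk ⟨![2, 3, 2], mem_N12_232⟩) = 1 := by
  show ((![2, 3, 2] : Fin 3 → ℤ) 1 : ZMod 2) = 1
  decide

lemma g12_surj : Function.Surjective g12 := by
  intro x
  have h : ∀ y : ZMod 2, y = 0 ∨ y = 1 := by decide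
  rcases h x with rfl | rfl
  · exact ⟨0, map_zero g12⟩
  · exact ⟨_, g12_mk_m⟩

/-- `L` has index `2` in `N₁₂`, and the class of `(2,3,2) = ½ρ₁ + ½ρ₂`
generates the quotient `N₁₂/L`. -/
theorem stmt_3 :
    Nat.card (N12 ⧸ L12.addSubgroupOf N12) = 2 ∧
    (2 : ℤ) • (![2, 3, 2] : Fin 3 → ℤ) = ![3, 2, 4] + ![1, 4, 0] ∧
    AddSubgroup.zmultiples
        ((QuotientAddGroup.mk ⟨![2, 3, 2], mem_N12_232⟩ :
          N12 ⧸ L12.addSubgroupOf N12)) = ⊤ := by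
  refine ⟨?_, ?_, ?_⟩
  · have e := AddEquiv.ofBijective g12 ⟨g12_inj, g12_surj⟩
    rw [Nat.card_congr e.toEquiv]
    simp [Nat.card_eq_fintype_card]
  · funext i; fin_cases i <;> decide
  · rw [eq_top_iff]
    intro q _
    rcases g12_surj (g12 q) with _
    have : g12 q = 0 ∨ g12 q = 1 := by
      have h : ∀ x : ZMod 2, x = 0 ∨ x = 1 := by decide
      exact h _
    rcases this with h | h
    · have : q = 0 := g12_inj (by simpa using h)
      rw [this]; exact zero_mem _
    · have : q = QuotientAddGroup.mk ⟨![2, 3, 2], mem_N12_232⟩ :=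
        g12_inj (by rw [h, g12_mk_m])
      rw [this]
      exact AddSubgroup.mem_zmultiples _
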